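/- Assume the CRK setup and all hypotheses of Theorem 3.1 (skew-symmetric M, K, skew-symmetric N×N matrix D, S continuously differentiable in its first argument, Δt > 0, continuous δ_t z_j : [0,1] → ℝ^d, z_j(τ) = z_j⁰ + Δt ∫₀¹ A_{τ,σ} δ_t z_j(σ) dσ, z_j¹ = z_j⁰ + Δt ∫₀¹ δ_t z_j(σ) dσ, δ_x z_j(τ) = Σ_k D_{jk} z_k(τ), and M δ_t z_j(τ) + K δ_x z_j(τ) = ∇_z S(z_j(τ), x_j) for all τ and j). Then the discrete global energy is exactly conserved: Σ_{j=0}^{N−1} E_j¹ = Σ_{j=0}^{N−1} E_j⁰, where E_j^α = S(z_j^α, x_j) − (1/2) (z_j^α)ᵀ K Σ_{k=0}^{N−1} D_{jk} z_k^α for α ∈ {0,1}. -/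

import Mathlib

open scoped Matrix

noncomputable def dotCLM {d : ℕ} (g : Fin d → ℝ) : (Fin d → ℝ) →L[ℝ] ℝ :=
  ∑ i : Fin d, g i • (ContinuousLinearMap.proj i : (Fin d → ℝ) →L[ℝ] ℝ)

noncomputable def lag {s : ℕ} (c : Fin s → ℝ) (i : Fin s) (τ : ℝ) : ℝ :=
  (Lagrange.basis (Finset.univ : Finset (Fin s)) c i).eval τ

noncomputable def bw {s : ℕ} (c : Fin s → ℝ) (i : Fin s) : ℝ :=
  ∫ τ in (0:ℝ)..1, lag c i τ

noncomputable def Acrk {s : ℕ} (c : Fin s → ℝ) (τ σ : ℝ) : ℝ :=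
  ∑ i : Fin s, (1 / bw c i) * (∫ α in (0:ℝ)..τ, lag c i α) * lag c i σ

noncomputable def wavg {s : ℕ} (c : Fin s → ℝ) (i : Fin s) {G : Type*}
    [NormedAddCommGroup G] [NormedSpace ℝ G] (f : ℝ → G) : G :=
  (1 / bw c i) • ∫ τ in (0:ℝ)..1, lag c i τ • f τ

/-!
Along the collocation polynomial `τ ↦ z j τ` the discrete energy changes at rate
`∑ j, (∇S - K δₓz_j) ⬝ᵥ z_j'`: skew-symmetry of both `K` and `D` makes the quadratic part a
symmetric bilinear form, so its derivative is twice a single term. The collocation equations turn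
the rate into `∑ j, M δₜz_j ⬝ᵥ z_j'`, and `z_j' = Δt ∑ i, lᵢ • ⟨δₜz_j⟩ᵢ`. Integrating over `[0, 1]`
the Lagrange weights reproduce the averages, leaving `Δt ∑ j i, bᵢ (M ⟨δₜz_j⟩ᵢ ⬝ᵥ ⟨δₜz_j⟩ᵢ) = 0`
since `M` is skew. Finally `A 1 σ = 1`, so the polynomial ends at `z1`.
-/

open MeasureTheory

namespace Matrix

variable {R n ι : Type*} [CommRing R] [Fintype n] [Fintype ι]

theorem dotProduct_mulVec_eq_neg_of_transpose_eq_neg {Q : Matrix n n R} (hQ : Qᵀ = -Q)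
    (u w : n → R) : u ⬝ᵥ Q *ᵥ w = -(w ⬝ᵥ Q *ᵥ u) := by
  rw [dotProduct_mulVec, ← mulVec_transpose, hQ, neg_mulVec, neg_dotProduct, dotProduct_comm]

theorem dotProduct_mulVec_self_eq_zero_of_transpose_eq_neg [NoZeroDivisors R] [CharZero R]
    {Q : Matrix n n R} (hQ : Qᵀ = -Q) (u : n → R) : u ⬝ᵥ Q *ᵥ u = 0 :=
  CharZero.eq_neg_self_iff.mp (dotProduct_mulVec_eq_neg_of_transpose_eq_neg hQ u u)

theorem sum_dotProduct_mulVec_sum_smul_comm {K : Matrix n n R} {D : Matrix ι ι R}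
    (hK : Kᵀ = -K) (hD : Dᵀ = -D) (u w : ι → n → R) :
    ∑ j, u j ⬝ᵥ K *ᵥ ∑ k, D j k • w k = ∑ j, w j ⬝ᵥ K *ᵥ ∑ k, D j k • u k := by
  have expand : ∀ (a : n → R) (b : ι → n → R) (j : ι),
      a ⬝ᵥ K *ᵥ ∑ k, D j k • b k = ∑ k, D j k * (a ⬝ᵥ K *ᵥ b k) := by
    intro a b j
    simp only [mulVec_sum, mulVec_smul, dotProduct_sum, dotProduct_smul, smul_eq_mul]
  simp only [expand]
  rw [Finset.sum_comm]
  refine Finset.sum_congr rfl fun j _ => Finset.sum_congr rfl fun k _ => ?_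
  rw [← neg_neg (D k j), ← transpose_apply D j k, hD,
    dotProduct_mulVec_eq_neg_of_transpose_eq_neg hK]
  simp

end Matrix

section Calculus

variable {n : Type*} [Fintype n] {u w : ℝ → n → ℝ} {u' w' : n → ℝ} {t : ℝ}

theorem HasDerivAt.dotProduct (hu : HasDerivAt u u' t) (hw : HasDerivAt w w' t) :
    HasDerivAt (fun t => u t ⬝ᵥ w t) (u' ⬝ᵥ w t + u t ⬝ᵥ w') t := by
  simp only [_root_.dotProduct, ← Finset.sum_add_distrib]
  exact HasDerivAt.fun_sum fun a _ => (hasDerivAt_pi.mp hu a).mul (hasDerivAt_pi.mp hw a)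

theorem HasDerivAt.matrix_mulVec (Q : Matrix n n ℝ) (hw : HasDerivAt w w' t) :
    HasDerivAt (fun t => Q *ᵥ w t) (Q *ᵥ w') t :=
  (Q.mulVecLin.toContinuousLinearMap.hasFDerivAt.comp_hasDerivAt t hw :)

theorem intervalIntegral.integral_mulVec_dotProduct (Q : Matrix n n ℝ) (v : n → ℝ) {g : ℝ → n → ℝ}
    {a b : ℝ} (hg : IntervalIntegrable g volume a b) :
    ∫ τ in a..b, Q *ᵥ g τ ⬝ᵥ v = Q *ᵥ (∫ τ in a..b, g τ) ⬝ᵥ v :=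
  (((dotProductBilin ℝ ℝ).flip v ∘ₗ Q.mulVecLin).toContinuousLinearMap.intervalIntegral_comp_comm
    hg :)

end Calculus

section CRK

variable {s : ℕ} (c : Fin s → ℝ)

@[fun_prop]
theorem continuous_lag (i : Fin s) : Continuous (lag c i) :=
  (Lagrange.basis Finset.univ c i).continuous

theorem sum_lag [Nonempty (Fin s)] (hc : Function.Injective c) (τ : ℝ) : ∑ i, lag c i τ = 1 := by
  simpa [lag, Polynomial.eval_finsetSum] using
    congrArg (Polynomial.eval τ) (Lagrange.sum_basis hc.injOn Finset.univ_nonempty)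

theorem Acrk_one_left [Nonempty (Fin s)] (hc : Function.Injective c) (hb : ∀ i, bw c i ≠ 0)
    (σ : ℝ) : Acrk c 1 σ = 1 := by
  change ∑ i, 1 / bw c i * bw c i * lag c i σ = 1
  simp only [one_div_mul_cancel (hb _), one_mul, sum_lag c hc]

variable {E : Type*} [NormedAddCommGroup E] [NormedSpace ℝ E] {f : ℝ → E}

theorem integral_lag_smul {i : Fin s} (hb : bw c i ≠ 0) :
    ∫ τ in (0:ℝ)..1, lag c i τ • f τ = bw c i • wavg c i f := by
  rw [wavg, smul_smul, mul_one_div_cancel hb, one_smul]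

theorem integral_Acrk_smul (hf : IntervalIntegrable f volume 0 1) (τ : ℝ) :
    ∫ σ in (0:ℝ)..1, Acrk c τ σ • f σ = ∑ i, (∫ α in (0:ℝ)..τ, lag c i α) • wavg c i f := by
  simp only [Acrk, Finset.sum_smul]
  rw [intervalIntegral.integral_finsetSum fun i _ => hf.continuousOn_smul (by fun_prop)]
  refine Finset.sum_congr rfl fun i _ => ?_
  simp only [mul_smul, intervalIntegral.integral_smul, wavg]
  exact smul_comm _ _ _

theorem hasDerivAt_integral_Acrk_smul (hf : IntervalIntegrable f volume 0 1) (τ : ℝ) :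
    HasDerivAt (fun τ => ∫ σ in (0:ℝ)..1, Acrk c τ σ • f σ) (∑ i, lag c i τ • wavg c i f) τ := by
  simp only [integral_Acrk_smul c hf]
  exact HasDerivAt.fun_sum fun i _ =>
    ((continuous_lag c i).integral_hasStrictDerivAt 0 τ).hasDerivAt.smul_const _

theorem integral_mulVec_dotProduct_sum_lag_smul_wavg {n : Type*} [Fintype n]
    (hb : ∀ i, bw c i ≠ 0) {M : Matrix n n ℝ} (hM : Mᵀ = -M) {g : ℝ → n → ℝ}
    (hg : ContinuousOn g (Set.Icc 0 1)) :
    ∫ τ in (0:ℝ)..1, M *ᵥ g τ ⬝ᵥ ∑ i, lag c i τ • wavg c i g = 0 := by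
  have hlg : ∀ i, ContinuousOn (fun τ => lag c i τ • g τ) (Set.Icc 0 1) := fun i => by fun_prop
  calc ∫ τ in (0:ℝ)..1, M *ᵥ g τ ⬝ᵥ ∑ i, lag c i τ • wavg c i g
      = ∑ i, ∫ τ in (0:ℝ)..1, M *ᵥ (lag c i τ • g τ) ⬝ᵥ wavg c i g := by
        rw [← intervalIntegral.integral_finsetSum fun i _ =>
          (by fun_prop : ContinuousOn _ _).intervalIntegrable_of_Icc zero_le_one]
        simp only [dotProduct_sum, dotProduct_smul, Matrix.mulVec_smul, smul_dotProduct]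
    _ = ∑ i, bw c i * (M *ᵥ wavg c i g ⬝ᵥ wavg c i g) := by
        refine Finset.sum_congr rfl fun i _ => ?_
        rw [intervalIntegral.integral_mulVec_dotProduct _ _
            ((hlg i).intervalIntegrable_of_Icc zero_le_one), integral_lag_smul c (hb i),
          Matrix.mulVec_smul, smul_dotProduct, smul_eq_mul]
    _ = 0 := by
        simp [dotProduct_comm (M *ᵥ _),
          Matrix.dotProduct_mulVec_self_eq_zero_of_transpose_eq_neg hM]

end CRK

section Energy

variable {d : ℕ} {ι : Type*} [Fintype ι]

theorem dotCLM_apply (g v : Fin d → ℝ) : dotCLM g v = g ⬝ᵥ v := by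
  simp [dotCLM, dotProduct]

noncomputable def discreteEnergy (S : (Fin d → ℝ) → ℝ → ℝ) (K : Matrix (Fin d) (Fin d) ℝ)
    (D : Matrix ι ι ℝ) (x : ι → ℝ) (u : ι → Fin d → ℝ) : ℝ :=
  ∑ j, (S (u j) (x j) - (1/2) * (u j ⬝ᵥ K *ᵥ ∑ k, D j k • u k))

theorem hasDerivAt_discreteEnergy {S : (Fin d → ℝ) → ℝ → ℝ}
    {gradS : (Fin d → ℝ) → ℝ → (Fin d → ℝ)}
    (hS : ∀ (x : ℝ) (w : Fin d → ℝ), HasFDerivAt (fun w' => S w' x) (dotCLM (gradS w x)) w)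
    {K : Matrix (Fin d) (Fin d) ℝ} (hK : Kᵀ = -K) {D : Matrix ι ι ℝ} (hD : Dᵀ = -D)
    (x : ι → ℝ) {u : ι → ℝ → Fin d → ℝ} {u' : ι → Fin d → ℝ} {t : ℝ}
    (hu : ∀ j, HasDerivAt (u j) (u' j) t) :
    HasDerivAt (fun t => discreteEnergy S K D x fun j => u j t)
      (∑ j, (gradS (u j t) (x j) - K *ᵥ ∑ k, D j k • u k t) ⬝ᵥ u' j) t := by
  have hpot := HasDerivAt.fun_sum fun j (_ : j ∈ Finset.univ) =>
    (hS (x j) (u j t)).comp_hasDerivAt t (hu j)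
  have hquad := HasDerivAt.fun_sum fun j (_ : j ∈ Finset.univ) =>
    (hu j).dotProduct <| (HasDerivAt.fun_sum fun k (_ : k ∈ Finset.univ) =>
      (hu k).const_smul (D j k)).matrix_mulVec K
  have hE : (fun t => discreteEnergy S K D x fun j => u j t) = fun t =>
      (∑ j, S (u j t) (x j)) - 1/2 * ∑ j, u j t ⬝ᵥ K *ᵥ ∑ k, D j k • u k t := by
    ext τ
    simp only [discreteEnergy, Finset.sum_sub_distrib, Finset.mul_sum]
  rw [hE]
  refine (hpot.sub (hquad.const_mul (1/2))).congr_deriv ?_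
  rw [Finset.sum_add_distrib, Matrix.sum_dotProduct_mulVec_sum_smul_comm hK hD (fun j => u j t)]
  simp only [dotCLM_apply, one_div, Pi.smul_apply, dotProduct_comm (u' _), sub_dotProduct,
    Finset.sum_sub_distrib, sub_right_inj]
  ring

end Energy

theorem stmt7_general {s d N : ℕ} (hs : 1 ≤ s) (c : Fin s → ℝ) (hc : Function.Injective c)
    (hb : ∀ i, bw c i ≠ 0)
    (M K : Matrix (Fin d) (Fin d) ℝ) (hM : Mᵀ = -M) (hK : Kᵀ = -K)
    (S : (Fin d → ℝ) → ℝ → ℝ) (gradS : (Fin d → ℝ) → ℝ → (Fin d → ℝ))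
    (hS : ∀ (x : ℝ) (w : Fin d → ℝ), HasFDerivAt (fun w' => S w' x) (dotCLM (gradS w x)) w)
    (D : Matrix (Fin N) (Fin N) ℝ) (hD : Dᵀ = -D)
    (x : Fin N → ℝ) (Δt : ℝ)
    (δtz : Fin N → ℝ → (Fin d → ℝ)) (hδtc : ∀ j, ContinuousOn (δtz j) (Set.Icc 0 1))
    (z0 : Fin N → Fin d → ℝ) (z : Fin N → ℝ → (Fin d → ℝ))
    (hz : ∀ j τ, z j τ = z0 j + Δt • ∫ σ in (0:ℝ)..1, Acrk c τ σ • δtz j σ)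
    (z1 : Fin N → Fin d → ℝ)
    (hz1 : ∀ j, z1 j = z0 j + Δt • ∫ σ in (0:ℝ)..1, δtz j σ)
    (δxz : Fin N → ℝ → (Fin d → ℝ))
    (hδx : ∀ j τ, δxz j τ = ∑ k, D j k • z k τ)
    (hcoll : ∀ j, ∀ τ ∈ Set.Icc (0:ℝ) 1,
      M.mulVec (δtz j τ) + K.mulVec (δxz j τ) = gradS (z j τ) (x j))
    (E0 E1 : Fin N → ℝ)
    (hE0 : ∀ j, E0 j = S (z j 0) (x j)
        - (1/2) * dotProduct (z j 0) (K.mulVec (∑ k, D j k • z k 0)))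
    (hE1 : ∀ j, E1 j = S (z1 j) (x j)
        - (1/2) * dotProduct (z1 j) (K.mulVec (∑ k, D j k • z1 k))) :
    ∑ j, E1 j = ∑ j, E0 j := by
  have : Nonempty (Fin s) := Fin.pos_iff_nonempty.mp hs
  set P : Fin N → ℝ → Fin d → ℝ := fun j τ => ∑ i, lag c i τ • wavg c i (δtz j)
  have hz' : ∀ j τ, HasDerivAt (z j) (Δt • P j τ) τ := fun j τ => by
    rw [funext (hz j)]
    exact ((hasDerivAt_integral_Acrk_smul c
      ((hδtc j).intervalIntegrable_of_Icc zero_le_one) τ).const_smul Δt).const_add _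
  have hF : ∀ τ ∈ Set.uIcc (0:ℝ) 1, HasDerivAt (fun t => discreteEnergy S K D x fun j => z j t)
      (Δt * ∑ j, M *ᵥ δtz j τ ⬝ᵥ P j τ) τ := by
    intro τ hτ
    rw [Set.uIcc_of_le zero_le_one] at hτ
    refine (hasDerivAt_discreteEnergy hS hK hD x fun j => hz' j τ).congr_deriv ?_
    simp only [← hδx, ← hcoll _ τ hτ, add_sub_cancel_right, dotProduct_smul, smul_eq_mul,
      Finset.mul_sum]
  have hF' : IntervalIntegrable (fun τ => Δt * ∑ j, M *ᵥ δtz j τ ⬝ᵥ P j τ) volume 0 1 :=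
    (by fun_prop : ContinuousOn _ _).intervalIntegrable_of_Icc zero_le_one
  have hdiss : ∫ τ in (0:ℝ)..1, Δt * ∑ j, M *ᵥ δtz j τ ⬝ᵥ P j τ = 0 := by
    rw [intervalIntegral.integral_const_mul, intervalIntegral.integral_finsetSum fun j _ =>
      (by fun_prop : ContinuousOn _ _).intervalIntegrable_of_Icc zero_le_one]
    simp [P, integral_mulVec_dotProduct_sum_lag_smul_wavg c hb hM (hδtc _)]
  have hz1' : (fun j => z j 1) = z1 := funext fun j => by
    simp [hz, hz1, Acrk_one_left c hc hb]
  calc ∑ j, E1 j = discreteEnergy S K D x fun j => z j 1 := by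
        rw [hz1']; exact Finset.sum_congr rfl fun j _ => hE1 j
    _ = discreteEnergy S K D x fun j => z j 0 := by
        linarith [intervalIntegral.integral_eq_sub_of_hasDerivAt hF hF']
    _ = ∑ j, E0 j := Finset.sum_congr rfl fun j _ => (hE0 j).symm

theorem stmt7 {s d N : ℕ} (hs : 1 ≤ s) (c : Fin s → ℝ) (hc : Function.Injective c)
    (hb : ∀ i, bw c i ≠ 0)
    (M K : Matrix (Fin d) (Fin d) ℝ) (hM : Mᵀ = -M) (hK : Kᵀ = -K)
    (S : (Fin d → ℝ) → ℝ → ℝ) (gradS : (Fin d → ℝ) → ℝ → (Fin d → ℝ))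
    (hS : ∀ (x : ℝ) (w : Fin d → ℝ), HasFDerivAt (fun w' => S w' x) (dotCLM (gradS w x)) w)
    (hSc : ∀ x : ℝ, Continuous fun w => gradS w x)
    (D : Matrix (Fin N) (Fin N) ℝ) (hD : Dᵀ = -D)
    (x : Fin N → ℝ) (Δt : ℝ) (hΔt : 0 < Δt)
    (δtz : Fin N → ℝ → (Fin d → ℝ)) (hδtc : ∀ j, ContinuousOn (δtz j) (Set.Icc 0 1))
    (z0 : Fin N → Fin d → ℝ) (z : Fin N → ℝ → (Fin d → ℝ))
    (hz : ∀ j τ, z j τ = z0 j + Δt • ∫ σ in (0:ℝ)..1, Acrk c τ σ • δtz j σ)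
    (z1 : Fin N → Fin d → ℝ)
    (hz1 : ∀ j, z1 j = z0 j + Δt • ∫ σ in (0:ℝ)..1, δtz j σ)
    (δxz : Fin N → ℝ → (Fin d → ℝ))
    (hδx : ∀ j τ, δxz j τ = ∑ k, D j k • z k τ)
    (hcoll : ∀ j, ∀ τ ∈ Set.Icc (0:ℝ) 1,
      M.mulVec (δtz j τ) + K.mulVec (δxz j τ) = gradS (z j τ) (x j))
    (E0 E1 : Fin N → ℝ)
    (hE0 : ∀ j, E0 j = S (z j 0) (x j)
        - (1/2) * dotProduct (z j 0) (K.mulVec (∑ k, D j k • z k 0)))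
    (hE1 : ∀ j, E1 j = S (z1 j) (x j)
        - (1/2) * dotProduct (z1 j) (K.mulVec (∑ k, D j k • z1 k))) :
    ∑ j, E1 j = ∑ j, E0 j :=
  stmt7_general hs c hc hb M K hM hK S gradS hS D hD x Δt δtz hδtc z0 z hz z1 hz1 δxz hδx hcoll E0
    E1 hE0 hE1
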